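/- Let σ(s,t) = (1/π)(L(πs) + L(πt) + L(π(1-s-t))) for (s,t) in the closed triangle T̄, where L(x) = -∫₀ˣ log|2 sin z| dz. Then σ is continuous on T̄, vanishes on the boundary ∂T (i.e., σ(s,t) = 0 whenever s = 0, t = 0, or s + t = 1), is concave on T̄, and is nonnegative on T̄. -/

import Mathlib

/-!
`L π = 0` comes from the classical value `∫₀^π log (sin z) dz = -π log 2`, and with
`sin (π - z) = sin z` it gives `L (π - x) = -L x`. Hence on each edge of the triangle one term
of `σ` vanishes and the other two cancel.

For concavity it suffices to restrict `σ` to a segment. In the interior `L'' = -cot`, so the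
second derivative along the segment is `-π (cot A u² + cot B v² + cot C w²)` with
`A + B + C = π` and `u + v + w = 0`; this quadratic form is a sum of squares divided by
`sin A sin B sin C > 0`. A segment whose relative interior meets the boundary lies in an edge,
where `σ` vanishes. Nonnegativity is then Jensen's inequality for the three vertices.
-/

/-- The Lobachevsky function `L(x) = -∫₀ˣ log|2 sin z| dz`. -/
noncomputable def lobachevsky (x : ℝ) : ℝ := -∫ z in (0 : ℝ)..x, Real.log |2 * Real.sin z|

/-- The lozenge surface tension `σ(s,t) = π⁻¹(L(πs) + L(πt) + L(π(1-s-t)))`. -/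
noncomputable def surfTension (q : ℝ × ℝ) : ℝ :=
  Real.pi⁻¹ * (lobachevsky (Real.pi * q.1) + lobachevsky (Real.pi * q.2) +
    lobachevsky (Real.pi * (1 - q.1 - q.2)))

/-- The closed triangle `T̄ = {(s,t) : s,t ≥ 0, s + t ≤ 1}`. -/
def Tbar : Set (ℝ × ℝ) := {q | 0 ≤ q.1 ∧ 0 ≤ q.2 ∧ q.1 + q.2 ≤ 1}

open Real Set MeasureTheory
open scoped Interval

theorem intervalIntegrable_log_abs_two_mul_sin (a b : ℝ) :
    IntervalIntegrable (fun z => log |2 * sin z|) volume a b :=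
  ((analyticOnNhd_const.mul analyticOnNhd_sin).meromorphicOn).intervalIntegrable_log_norm

@[fun_prop]
theorem continuous_lobachevsky : Continuous lobachevsky :=
  (intervalIntegral.continuous_primitive intervalIntegrable_log_abs_two_mul_sin 0).neg

@[simp]
theorem lobachevsky_zero : lobachevsky 0 = 0 := by simp [lobachevsky]

theorem lobachevsky_pi : lobachevsky π = 0 := by
  have hsplit : (fun z => log |2 * sin z|) =ᶠ[Filter.codiscreteWithin (Ι 0 π)]
      fun z => log 2 + log (sin z) := by
    apply Filter.codiscreteWithin_mono (subset_univ _)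
    filter_upwards [analyticOnNhd_sin.preimage_zero_mem_codiscrete (x := π / 2) (by simp)]
      with z hz
    rw [log_abs, log_mul two_ne_zero hz]
  rw [lobachevsky, intervalIntegral.integral_congr_codiscreteWithin hsplit,
    intervalIntegral.integral_add intervalIntegrable_const (g := fun z => log (sin z))
      intervalIntegrable_log_sin,
    intervalIntegral.integral_const, integral_log_sin_zero_pi, sub_zero, smul_eq_mul]
  ring

theorem lobachevsky_pi_sub (x : ℝ) : lobachevsky (π - x) = -lobachevsky x := by
  have hreflect : ∫ z in π..π - x, log |2 * sin z| = -∫ z in 0..x, log |2 * sin z| := by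
    have := intervalIntegral.integral_comp_sub_left (fun z => log |2 * sin z|) π (a := 0) (b := x)
    simp only [sin_pi_sub, sub_zero] at this
    rw [this, intervalIntegral.integral_symm]
  have hπ : ∫ z in 0..π, log |2 * sin z| = 0 := by simpa [lobachevsky] using lobachevsky_pi
  rw [lobachevsky, lobachevsky, ← intervalIntegral.integral_add_adjacent_intervals
    (intervalIntegrable_log_abs_two_mul_sin 0 π) (intervalIntegrable_log_abs_two_mul_sin π _),
    hπ, hreflect, zero_add]

theorem hasDerivAt_lobachevsky {x : ℝ} (hx : sin x ≠ 0) :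
    HasDerivAt lobachevsky (-log |2 * sin x|) x := by
  have hcont : ContinuousAt (fun z => log |2 * sin z|) x :=
    ((continuous_const.mul continuous_sin).abs.continuousAt).log (by simpa using hx)
  have hmeas : Measurable fun z => log |2 * sin z| := by fun_prop
  exact (intervalIntegral.integral_hasDerivAt_right (intervalIntegrable_log_abs_two_mul_sin 0 x)
    hmeas.aestronglyMeasurable.stronglyMeasurableAtFilter hcont).neg

theorem hasDerivAt_neg_log_abs_two_mul_sin {x : ℝ} (hx : sin x ≠ 0) :
    HasDerivAt (fun z => -log |2 * sin z|) (-cot x) x := by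
  have := (((hasDerivAt_sin x).const_mul 2).log (by simpa using hx)).fun_neg
  rw [mul_div_mul_left _ _ two_ne_zero, ← cot_eq_cos_div_sin] at this
  simpa only [log_abs] using this

theorem continuous_surfTension : Continuous surfTension := by
  unfold surfTension; fun_prop

theorem lobachevsky_add_lobachevsky_pi_sub (x : ℝ) : lobachevsky x + lobachevsky (π - x) = 0 := by
  rw [lobachevsky_pi_sub, add_neg_cancel]

theorem surfTension_eq_zero_of_boundary {q : ℝ × ℝ} (h : q.1 = 0 ∨ q.2 = 0 ∨ q.1 + q.2 = 1) :
    surfTension q = 0 := by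
  obtain ⟨s, t⟩ := q
  rcases h with rfl | rfl | h
  · simp [surfTension, mul_one_sub, lobachevsky_add_lobachevsky_pi_sub]
  · simp [surfTension, mul_one_sub, lobachevsky_add_lobachevsky_pi_sub]
  · obtain rfl : t = 1 - s := by linarith
    simp [surfTension, mul_one_sub, lobachevsky_add_lobachevsky_pi_sub]

theorem cot_mul_sq_add_nonneg {A B C : ℝ} (hA : 0 < A) (hB : 0 < B) (hC : 0 < C)
    (hABC : A + B + C = π) {u v w : ℝ} (huvw : u + v + w = 0) :
    0 ≤ cot A * u ^ 2 + cot B * v ^ 2 + cot C * w ^ 2 := by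
  obtain rfl : C = π - (A + B) := by linarith
  obtain rfl : w = -(u + v) := by linarith
  have hsA := sin_pos_of_pos_of_lt_pi hA (by linarith)
  have hsB := sin_pos_of_pos_of_lt_pi hB (by linarith)
  have hsAB := sin_pos_of_pos_of_lt_pi (add_pos hA hB) (by linarith)
  rw [sin_add] at hsAB
  have hsos : cot A * u ^ 2 + cot B * v ^ 2 + cot (π - (A + B)) * (-(u + v)) ^ 2 =
      ((u * cos A * sin B - v * sin A * cos B) ^ 2 + ((u + v) * sin A * sin B) ^ 2) /
        (sin A * sin B * (sin A * cos B + cos A * sin B)) := by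
    simp only [cot_eq_cos_div_sin, cos_pi_sub, sin_pi_sub, sin_add, cos_add]
    field_simp
    ring
  rw [hsos]
  positivity

theorem hasDerivAt_one_sub_mul_add_mul (a b c : ℝ) :
    HasDerivAt (fun c => (1 - c) * a + c * b) (b - a) c := by
  simpa [neg_add_eq_sub] using
    ((hasDerivAt_id c).const_sub 1 |>.mul_const a).fun_add ((hasDerivAt_id c).mul_const b)

theorem hasDerivAt_lobachevsky_segment {a b c : ℝ} (h : sin ((1 - c) * a + c * b) ≠ 0) :
    HasDerivAt (fun c => lobachevsky ((1 - c) * a + c * b))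
      (-log |2 * sin ((1 - c) * a + c * b)| * (b - a)) c :=
  (hasDerivAt_lobachevsky h).comp (h₂ := lobachevsky) c (hasDerivAt_one_sub_mul_add_mul a b c)

theorem hasDerivAt_neg_log_abs_two_mul_sin_segment {a b c : ℝ}
    (h : sin ((1 - c) * a + c * b) ≠ 0) :
    HasDerivAt (fun c => -log |2 * sin ((1 - c) * a + c * b)| * (b - a))
      (-cot ((1 - c) * a + c * b) * (b - a) * (b - a)) c :=
  ((hasDerivAt_neg_log_abs_two_mul_sin h).comp (h₂ := fun z => -log |2 * sin z|) c
    (hasDerivAt_one_sub_mul_add_mul a b c)).mul_const (b - a)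

theorem concaveOn_lobachevsky_sum_segment {a₁ a₂ a₃ b₁ b₂ b₃ : ℝ}
    (ha : a₁ + a₂ + a₃ = π) (hb : b₁ + b₂ + b₃ = π)
    (hpos : ∀ c ∈ Ioo (0 : ℝ) 1, 0 < (1 - c) * a₁ + c * b₁ ∧ 0 < (1 - c) * a₂ + c * b₂ ∧
      0 < (1 - c) * a₃ + c * b₃) :
    ConcaveOn ℝ (Icc 0 1) fun c => lobachevsky ((1 - c) * a₁ + c * b₁) +
      lobachevsky ((1 - c) * a₂ + c * b₂) + lobachevsky ((1 - c) * a₃ + c * b₃) := by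
  have hsum (c : ℝ) : ((1 - c) * a₁ + c * b₁) + ((1 - c) * a₂ + c * b₂) +
      ((1 - c) * a₃ + c * b₃) = π := by linear_combination (1 - c) * ha + c * hb
  have hsin : ∀ c ∈ Ioo (0 : ℝ) 1, sin ((1 - c) * a₁ + c * b₁) ≠ 0 ∧
      sin ((1 - c) * a₂ + c * b₂) ≠ 0 ∧ sin ((1 - c) * a₃ + c * b₃) ≠ 0 := by
    intro c hc
    obtain ⟨h₁, h₂, h₃⟩ := hpos c hc
    have := hsum c
    exact ⟨(sin_pos_of_pos_of_lt_pi h₁ (by linarith)).ne',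
      (sin_pos_of_pos_of_lt_pi h₂ (by linarith)).ne', (sin_pos_of_pos_of_lt_pi h₃ (by linarith)).ne'⟩
  rw [← interior_Icc] at hpos hsin
  refine concaveOn_of_hasDerivWithinAt2_nonpos (convex_Icc 0 1) (by fun_prop)
    (f' := fun c => -log |2 * sin ((1 - c) * a₁ + c * b₁)| * (b₁ - a₁) +
      -log |2 * sin ((1 - c) * a₂ + c * b₂)| * (b₂ - a₂) +
      -log |2 * sin ((1 - c) * a₃ + c * b₃)| * (b₃ - a₃))
    (f'' := fun c => -cot ((1 - c) * a₁ + c * b₁) * (b₁ - a₁) * (b₁ - a₁) +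
      -cot ((1 - c) * a₂ + c * b₂) * (b₂ - a₂) * (b₂ - a₂) +
      -cot ((1 - c) * a₃ + c * b₃) * (b₃ - a₃) * (b₃ - a₃))
    (fun c hc => ?_) (fun c hc => ?_) (fun c hc => ?_)
  · obtain ⟨h₁, h₂, h₃⟩ := hsin c hc
    exact (((hasDerivAt_lobachevsky_segment h₁).add (hasDerivAt_lobachevsky_segment h₂)).add
      (hasDerivAt_lobachevsky_segment h₃)).hasDerivWithinAt
  · obtain ⟨h₁, h₂, h₃⟩ := hsin c hc
    exact (((hasDerivAt_neg_log_abs_two_mul_sin_segment h₁).add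
      (hasDerivAt_neg_log_abs_two_mul_sin_segment h₂)).add
      (hasDerivAt_neg_log_abs_two_mul_sin_segment h₃)).hasDerivWithinAt
  · obtain ⟨h₁, h₂, h₃⟩ := hpos c hc
    have := cot_mul_sq_add_nonneg h₁ h₂ h₃ (hsum c) (u := b₁ - a₁) (v := b₂ - a₂) (w := b₃ - a₃)
      (by linarith)
    linarith

theorem one_sub_mul_add_mul_pos {a b c : ℝ} (ha : 0 ≤ a) (hb : 0 ≤ b) (hab : 0 < a ∨ 0 < b)
    (hc : c ∈ Ioo (0 : ℝ) 1) : 0 < (1 - c) * a + c * b := by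
  have := hc.1; have := hc.2
  rcases hab with hab | hab <;> positivity

theorem concaveOn_of_forall_concaveOn_segment {E : Type*} [AddCommGroup E] [Module ℝ E]
    {s : Set E} {f : E → ℝ} (hs : Convex ℝ s)
    (h : ∀ x ∈ s, ∀ y ∈ s, ConcaveOn ℝ (Icc 0 1) fun c : ℝ => f ((1 - c) • x + c • y)) :
    ConcaveOn ℝ s f := by
  refine ⟨hs, fun x hx y hy a b ha hb hab => ?_⟩
  have := (h x hx y hy).2 (x := 0) (y := 1) ⟨le_rfl, zero_le_one⟩ ⟨zero_le_one, le_rfl⟩ ha hb hab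
  obtain rfl : a = 1 - b := by linarith
  simpa using this

theorem convex_Tbar : Convex ℝ Tbar := by
  rintro p ⟨hp₁, hp₂, hp₃⟩ q ⟨hq₁, hq₂, hq₃⟩ a b ha hb hab
  refine ⟨?_, ?_, ?_⟩ <;> simp only [Prod.fst_add, Prod.snd_add, Prod.smul_fst,
    Prod.smul_snd, smul_eq_mul] <;> nlinarith

theorem concaveOn_surfTension_segment {x y : ℝ × ℝ} (hx : x ∈ Tbar) (hy : y ∈ Tbar) :
    ConcaveOn ℝ (Icc 0 1) fun c : ℝ => surfTension ((1 - c) • x + c • y) := by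
  obtain ⟨hx₁, hx₂, hx₃⟩ := hx
  obtain ⟨hy₁, hy₂, hy₃⟩ := hy
  by_cases hint : (0 < x.1 ∨ 0 < y.1) ∧ (0 < x.2 ∨ 0 < y.2) ∧
      (0 < 1 - x.1 - x.2 ∨ 0 < 1 - y.1 - y.2)
  · obtain ⟨h₁, h₂, h₃⟩ := hint
    have hπ := pi_pos
    have hseg := concaveOn_lobachevsky_sum_segment (a₁ := π * x.1) (a₂ := π * x.2)
      (a₃ := π * (1 - x.1 - x.2)) (b₁ := π * y.1) (b₂ := π * y.2) (b₃ := π * (1 - y.1 - y.2))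
      (by ring) (by ring) fun c hc => ⟨?_, ?_, ?_⟩
    · refine (hseg.smul (inv_nonneg.2 hπ.le)).congr fun c _ => ?_
      simp only [surfTension, Prod.fst_add, Prod.snd_add, Prod.smul_fst, Prod.smul_snd,
        smul_eq_mul]
      ring_nf
    · exact one_sub_mul_add_mul_pos (by positivity) (by positivity)
        (h₁.imp (mul_pos hπ) (mul_pos hπ)) hc
    · exact one_sub_mul_add_mul_pos (by positivity) (by positivity)
        (h₂.imp (mul_pos hπ) (mul_pos hπ)) hc
    · exact one_sub_mul_add_mul_pos (mul_nonneg hπ.le (by linarith))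
        (mul_nonneg hπ.le (by linarith)) (h₃.imp (mul_pos hπ) (mul_pos hπ)) hc
  · -- the segment lies in one edge of the triangle
    refine (concaveOn_const 0 (convex_Icc 0 1)).congr fun c _ =>
      (surfTension_eq_zero_of_boundary ?_).symm
    simp only [not_and_or, not_or, not_lt] at hint
    simp only [Prod.fst_add, Prod.snd_add, Prod.smul_fst, Prod.smul_snd, smul_eq_mul]
    rcases hint with ⟨h, h'⟩ | ⟨h, h'⟩ | ⟨h, h'⟩
    · left; simp [le_antisymm h hx₁, le_antisymm h' hy₁]
    · right; left; simp [le_antisymm h hx₂, le_antisymm h' hy₂]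
    · have hx : x.1 + x.2 = 1 := by linarith
      have hy : y.1 + y.2 = 1 := by linarith
      right; right
      linear_combination (1 - c) * hx + c * hy

theorem concaveOn_surfTension : ConcaveOn ℝ Tbar surfTension :=
  concaveOn_of_forall_concaveOn_segment convex_Tbar fun _ hx _ hy =>
    concaveOn_surfTension_segment hx hy

theorem surfTension_nonneg {q : ℝ × ℝ} (hq : q ∈ Tbar) : 0 ≤ surfTension q := by
  obtain ⟨h₁, h₂, h₃⟩ := hq
  have hjensen := concaveOn_surfTension.le_map_sum (t := Finset.univ)
    (w := ![1 - q.1 - q.2, q.1, q.2]) (p := ![(0, 0), (1, 0), (0, 1)])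
    (by simp [Fin.forall_fin_succ]; exact ⟨by linarith, h₁, h₂⟩)
    (by simp [Fin.sum_univ_three]; ring) (by simp [Fin.forall_fin_succ, Tbar])
  simpa [Fin.sum_univ_three, surfTension_eq_zero_of_boundary] using hjensen

/-- The surface tension `σ` is continuous on `T̄`, vanishes on the boundary of the triangle,
is concave on `T̄`, and is nonnegative on `T̄`. -/
theorem stmt12 :
    ContinuousOn surfTension Tbar ∧
    (∀ q ∈ Tbar, (q.1 = 0 ∨ q.2 = 0 ∨ q.1 + q.2 = 1) → surfTension q = 0) ∧
    ConcaveOn ℝ Tbar surfTension ∧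
    (∀ q ∈ Tbar, 0 ≤ surfTension q) :=
  ⟨continuous_surfTension.continuousOn, fun _ _ h => surfTension_eq_zero_of_boundary h,
    concaveOn_surfTension, fun _ hq => surfTension_nonneg hq⟩
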